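/- For a ≥ 2, the graph K_4(a-2, a-1, a+1, a+2) obtained from the complete graph K_4 by attaching pendant paths of lengths a-2, a-1, a+1, a+2 to its four vertices respectively is transmission irregular if and only if a ≢ 2 (mod 3). -/

import Mathlib

/-- The transmission of a vertex: sum of distances to all other vertices. -/
noncomputable def transmission {V : Type*} [Fintype V] (G : SimpleGraph V) (v : V) : ℕ :=
  ∑ u : V, G.dist v u

/-- Arm lengths of `K₄(a-2, a-1, a+1, a+2)`. -/
def armLen (a : ℕ) : Fin 4 → ℕ := ![a - 2, a - 1, a + 1, a + 2]

/-- Vertex set: `Fin 4` is the core `K₄`, and `⟨i, j⟩` is the `(j+1)`-st vertex of the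
pendant path attached at core vertex `i`. -/
abbrev KVert (a : ℕ) : Type := Fin 4 ⊕ (Σ i : Fin 4, Fin (armLen a i))

/-- The graph `K₄(a-2, a-1, a+1, a+2)`: the complete graph `K₄` with pendant paths of
lengths `a-2`, `a-1`, `a+1`, `a+2` attached at its four vertices. -/
def Kgraph (a : ℕ) : SimpleGraph (KVert a) :=
  SimpleGraph.fromRel (fun x y =>
    match x, y with
    | Sum.inl c, Sum.inl c' => c ≠ c'
    | Sum.inl c, Sum.inr q => c = q.1 ∧ (q.2 : ℕ) = 0
    | Sum.inr q, Sum.inr q' => q.1 = q'.1 ∧ (q'.2 : ℕ) = (q.2 : ℕ) + 1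
    | _, _ => False)

/-!
Write a vertex as `⟨i, d⟩`: it lies at depth `d` on arm `i`, depth `0` being the core vertex `i`.
Then its distance to `⟨j, e⟩` is `|d - e|` if `i = j` and `d + e + 1` otherwise, and summing gives
`T⟨i, d⟩ + (2d + 1) k_i + d + 1 = d² + n (d + 1) + C`, where `n` is the order of the graph and `C`
does not depend on the vertex. For the arm lengths `k_i = a + ε_i`, `ε = (-2, -1, 1, 2)`, this
says that `T⟨i, d⟩ - d² - (2a + 3) d + ε_i (2d + 1)` is constant. If `T⟨i, e + δ⟩ = T⟨j, e⟩`
with `δ ≥ 0` then `δ (2e + δ + 2a + 3 - 2ε_i) = (ε_i - ε_j)(2e + 1)`; as `|ε| ≤ 2` this forces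
`δ ≤ 3`, and the remaining finitely many linear equations have the single solution
`ε_i = 2, ε_j = -2, δ = 1, a = 3e + 2`, i.e. `T⟨0, m⟩ = T⟨3, m + 1⟩` when `a = 3m + 2`.
-/

open Finset

theorem SimpleGraph.dist_eq_of_descent {V : Type*} (G : SimpleGraph V) (d : V → V → ℕ)
    (hself : ∀ x, d x x = 0) (hzero : ∀ x y, d x y = 0 → x = y)
    (hadj : ∀ x y z, G.Adj x y → d x z ≤ d y z + 1)
    (hstep : ∀ x z, d x z ≠ 0 → ∃ y, G.Adj x y ∧ d y z + 1 = d x z) (x z : V) :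
    G.dist x z = d x z := by
  have hwalk : ∀ n x, d x z = n → ∃ p : G.Walk x z, p.length = n := by
    intro n
    induction n with
    | zero => intro x hx; obtain rfl := hzero x z hx; exact ⟨.nil, rfl⟩
    | succ n ih =>
      intro x hx
      obtain ⟨y, hxy, hy⟩ := hstep x z (by omega)
      obtain ⟨p, hp⟩ := ih y (by omega)
      exact ⟨.cons hxy p, by simp [hp]⟩
  have hle : ∀ {x y} (p : G.Walk x y), d x y ≤ p.length := by
    intro x y p
    induction p with
    | nil => simp [hself]
    | @cons u v w hxy p ih =>
      have := hadj u v w hxy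
      simp only [SimpleGraph.Walk.length_cons]
      omega
  obtain ⟨p, hp⟩ := hwalk _ x rfl
  obtain ⟨q, hq⟩ := SimpleGraph.Reachable.exists_walk_length_eq_dist ⟨p⟩
  exact le_antisymm (hp ▸ SimpleGraph.dist_le p) (hq ▸ hle q)

def pendantPathGraph {ι : Type*} (k : ι → ℕ) : SimpleGraph (ι ⊕ Σ i, Fin (k i)) :=
  SimpleGraph.fromRel (fun x y =>
    match x, y with
    | Sum.inl c, Sum.inl c' => c ≠ c'
    | Sum.inl c, Sum.inr q => c = q.1 ∧ (q.2 : ℕ) = 0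
    | Sum.inr q, Sum.inr q' => q.1 = q'.1 ∧ (q'.2 : ℕ) = (q.2 : ℕ) + 1
    | _, _ => False)

theorem Kgraph_eq_pendantPathGraph (a : ℕ) : Kgraph a = pendantPathGraph (armLen a) := by
  ext x y; rcases x with _ | _ <;> rcases y with _ | _ <;> rfl

theorem sum_range_dist_add_mul {d n : ℕ} (h : d ≤ n) :
    ∑ t ∈ range (n + 1), Nat.dist d t + d * n = d ^ 2 + ∑ t ∈ range (n + 1), t := by
  induction n, h using Nat.le_induction with
  | base =>
    have hrefl : ∑ t ∈ range (d + 1), Nat.dist d t = ∑ t ∈ range (d + 1), t := by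
      rw [← sum_range_reflect (fun t => t)]
      exact sum_congr rfl fun t ht => by
        have := mem_range.mp ht; rw [Nat.dist_eq_sub_of_le_right (by omega)]; omega
    rw [hrefl]; ring
  | succ n hdn ih =>
    rw [sum_range_succ (Nat.dist d), sum_range_succ (fun t => t) (n + 1),
      Nat.dist_eq_sub_of_le (by omega)]
    have : d * (n + 1) = d * n + d := by ring
    omega

namespace pendantPathGraph

variable {ι : Type*} (k : ι → ℕ)

def coord : (ι ⊕ Σ i, Fin (k i)) ≃ Σ i, Fin (k i + 1) where
  toFun
    | .inl i => ⟨i, 0⟩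
    | .inr q => ⟨q.1, q.2.succ⟩
  invFun p := Fin.cases (.inl p.1) (fun j => .inr ⟨p.1, j⟩) p.2
  left_inv := by rintro (i | ⟨i, j⟩) <;> rfl
  right_inv := by rintro ⟨i, t⟩; cases t using Fin.cases <;> rfl

variable {k} [DecidableEq ι]

def armDist (p q : Σ i, Fin (k i + 1)) : ℕ :=
  if p.1 = q.1 then Nat.dist p.2 q.2 else p.2 + q.2 + 1

theorem armDist_self (p : Σ i, Fin (k i + 1)) : armDist p p = 0 := by
  simp [armDist, Nat.dist_self]

theorem eq_of_armDist_eq_zero {p q : Σ i, Fin (k i + 1)} (h : armDist p q = 0) : p = q := by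
  obtain ⟨i, s⟩ := p
  obtain ⟨j, t⟩ := q
  unfold armDist Nat.dist at h
  split_ifs at h with hij
  subst hij
  exact Sigma.ext rfl (heq_of_eq (Fin.ext (by omega)))

theorem armDist_triangle (p q r : Σ i, Fin (k i + 1)) :
    armDist p r ≤ armDist p q + armDist q r := by
  unfold armDist Nat.dist
  split_ifs <;> simp_all <;> omega

theorem adj_iff_armDist_eq_one {x y : ι ⊕ Σ i, Fin (k i)} :
    (pendantPathGraph k).Adj x y ↔ armDist (coord k x) (coord k y) = 1 := by
  rcases x with i | ⟨i, s⟩ <;> rcases y with j | ⟨j, t⟩ <;> by_cases hij : i = j <;>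
    simp [pendantPathGraph, coord, armDist, Nat.dist, hij] <;> grind

theorem exists_armDist_eq_one_of_ne {p r : Σ i, Fin (k i + 1)} (h : p ≠ r) :
    ∃ q, armDist p q = 1 ∧ armDist q r + 1 = armDist p r := by
  obtain ⟨i, s⟩ := p
  obtain ⟨j, t⟩ := r
  by_cases hij : i = j
  · subst hij
    have hst : (s : ℕ) ≠ t := fun h' => h (Sigma.ext rfl (heq_of_eq (Fin.ext h')))
    rcases lt_or_gt_of_ne hst with hlt | hgt
    · refine ⟨⟨i, ⟨s + 1, by omega⟩⟩, ?_, ?_⟩ <;> simp only [armDist, ↓reduceIte, Nat.dist] <;>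
        omega
    · refine ⟨⟨i, ⟨s - 1, by omega⟩⟩, ?_, ?_⟩ <;> simp only [armDist, ↓reduceIte, Nat.dist] <;>
        omega
  · by_cases hs : (s : ℕ) = 0
    · refine ⟨⟨j, 0⟩, ?_, ?_⟩ <;> simp [armDist, Nat.dist, hij, hs]
    · refine ⟨⟨i, ⟨s - 1, by omega⟩⟩, ?_, ?_⟩ <;>
        simp only [armDist, ↓reduceIte, hij, Nat.dist] <;> omega

theorem dist_eq_armDist (x y : ι ⊕ Σ i, Fin (k i)) :
    (pendantPathGraph k).dist x y = armDist (coord k x) (coord k y) := by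
  refine SimpleGraph.dist_eq_of_descent _ (fun x y => armDist (coord k x) (coord k y))
    (fun x => armDist_self _) (fun x y h => (coord k).injective (eq_of_armDist_eq_zero h))
    (fun x y z hxy => ?_) (fun x z hxz => ?_) x y
  · have := armDist_triangle (coord k x) (coord k y) (coord k z)
    rw [adj_iff_armDist_eq_one.mp hxy] at this
    omega
  · obtain ⟨q, hq, hqz⟩ := exists_armDist_eq_one_of_ne
      (p := coord k x) (r := coord k z) fun h => hxz (by simp only [h, armDist_self])
    exact ⟨(coord k).symm q, by simpa [adj_iff_armDist_eq_one] using ⟨hq, hqz⟩⟩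

variable [Fintype ι]

theorem transmission_coord_symm (p : Σ i, Fin (k i + 1)) :
    transmission (pendantPathGraph k) ((coord k).symm p) + (2 * p.2 + 1) * k p.1 + (p.2 + 1)
      = p.2 ^ 2 + (p.2 + 1) * ∑ m, (k m + 1) + ∑ m, ∑ t ∈ range (k m + 1), t := by
  obtain ⟨i, d⟩ := p
  set B : ι → ℕ := fun m => (k m + 1) * (d + 1) + ∑ t ∈ range (k m + 1), t with hBdef
  have hother : ∀ m ≠ i, ∑ t : Fin (k m + 1), armDist ⟨i, d⟩ ⟨m, t⟩ = B m := by
    intro m hm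
    simp only [armDist, Ne.symm hm, if_false]
    rw [Fin.sum_univ_eq_sum_range (fun t => (d : ℕ) + t + 1), sum_add_distrib, sum_add_distrib]
    simp only [hBdef, sum_const, card_range, smul_eq_mul]
    ring
  have hown : ∑ t : Fin (k i + 1), armDist ⟨i, d⟩ ⟨i, t⟩ = ∑ t ∈ range (k i + 1), Nat.dist d t := by
    simp only [armDist, if_true]
    exact Fin.sum_univ_eq_sum_range (Nat.dist d) _
  have hsplit : transmission (pendantPathGraph k) ((coord k).symm ⟨i, d⟩) + B i
      = ∑ t ∈ range (k i + 1), Nat.dist d t + ∑ m, B m := by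
    simp only [transmission, dist_eq_armDist, Equiv.apply_symm_apply]
    rw [Equiv.sum_comp (coord k) (armDist ⟨i, d⟩), Fintype.sum_sigma, ← hown,
      ← add_sum_erase _ _ (mem_univ i), ← add_sum_erase _ _ (mem_univ i),
      sum_congr rfl fun m hm => hother m (ne_of_mem_erase hm)]
    ring
  have hgauss := sum_range_dist_add_mul (Nat.lt_succ_iff.mp d.isLt)
  have hB : ∑ m, B m = (d + 1) * ∑ m, (k m + 1) + ∑ m, ∑ t ∈ range (k m + 1), t := by
    simp only [hBdef, sum_add_distrib, ← sum_mul]; ring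
  simp only [hBdef] at hsplit hB
  linear_combination hsplit + hgauss + hB

end pendantPathGraph

open pendantPathGraph

def armOffset : Fin 4 → ℤ := ![-2, -1, 1, 2]

theorem armOffset_mem_Icc (i : Fin 4) : armOffset i ∈ Set.Icc (-2) 2 := by
  fin_cases i <;> simp [armOffset]

theorem armLen_eq_add_armOffset {a : ℕ} (ha : 2 ≤ a) (i : Fin 4) :
    (armLen a i : ℤ) = a + armOffset i := by
  fin_cases i <;> simp [armLen, armOffset] <;> omega

theorem sum_armLen_add_one {a : ℕ} (ha : 2 ≤ a) : ∑ i, (armLen a i + 1) = 4 * a + 4 := by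
  simp only [armLen, Fin.sum_univ_four, Matrix.cons_val_zero, Matrix.cons_val_one, Matrix.cons_val]
  omega

def reducedTransmission (a : ℤ) (i : Fin 4) (d : ℤ) : ℤ :=
  d ^ 2 + (2 * a + 3) * d - armOffset i * (2 * d + 1)

theorem transmission_Kgraph_coord_symm {a : ℕ} (ha : 2 ≤ a) (p : Σ i, Fin (armLen a i + 1)) :
    (transmission (Kgraph a) ((coord _).symm p) : ℤ) = reducedTransmission a p.1 p.2
      + (3 * a + 3 + ∑ m, ∑ t ∈ range (armLen a m + 1), t) := by
  have h := transmission_coord_symm p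
  rw [sum_armLen_add_one ha] at h
  rw [Kgraph_eq_pendantPathGraph, reducedTransmission]
  have hk := armLen_eq_add_armOffset ha p.1
  push_cast
  zify at h
  linear_combination h - (2 * (p.2 : ℤ) + 1) * hk

theorem eq_of_reducedTransmission_eq {a d e : ℤ} {i j : Fin 4} (ha : 1 ≤ a) (ha3 : a % 3 ≠ 2)
    (hd : 0 ≤ d) (he : 0 ≤ e) (hdi : d ≤ a + armOffset i) (hej : e ≤ a + armOffset j)
    (h : reducedTransmission a i d = reducedTransmission a j e) : i = j ∧ d = e := by
  wlog hed : e ≤ d generalizing i j d e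
  · obtain ⟨rfl, rfl⟩ := this he hd hej hdi h.symm (by omega)
    exact ⟨rfl, rfl⟩
  obtain ⟨δ, hδ, rfl⟩ : ∃ δ, 0 ≤ δ ∧ d = e + δ := ⟨d - e, by omega, by ring⟩
  have key : δ * (2 * e + δ + 2 * a + 3 - 2 * armOffset i)
      = (armOffset i - armOffset j) * (2 * e + 1) := by
    unfold reducedTransmission at h
    linear_combination h
  have hδ3 : δ ≤ 3 := by
    obtain ⟨hi, hi'⟩ := armOffset_mem_Icc i
    obtain ⟨hj, hj'⟩ := armOffset_mem_Icc j
    by_contra! hδ4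
    nlinarith [mul_nonneg (by linarith : (0 : ℤ) ≤ δ - 4)
        (by linarith : (0 : ℤ) ≤ 2 * e + δ + 2 * a + 3 - 2 * armOffset i),
      mul_nonneg (by linarith : (0 : ℤ) ≤ 4 - (armOffset i - armOffset j))
        (by linarith : (0 : ℤ) ≤ 2 * e + 1)]
  fin_cases i <;> fin_cases j <;> simp [armOffset] at key hdi hej ⊢ <;> interval_cases δ <;> omega

theorem transmission_Kgraph_eq_iff {a : ℕ} (ha : 2 ≤ a) (p q : Σ i, Fin (armLen a i + 1)) :
    transmission (Kgraph a) ((coord _).symm p) = transmission (Kgraph a) ((coord _).symm q) ↔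
      reducedTransmission a p.1 p.2 = reducedTransmission a q.1 q.2 := by
  rw [← Int.natCast_inj, transmission_Kgraph_coord_symm ha, transmission_Kgraph_coord_symm ha,
    add_left_inj]

theorem injective_transmission_Kgraph {a : ℕ} (ha : 2 ≤ a) (ha3 : a % 3 ≠ 2) :
    Function.Injective (transmission (Kgraph a)) := by
  rw [← (coord (armLen a)).symm.injective_comp]
  rintro ⟨i, d⟩ ⟨j, e⟩ h
  have hred := (transmission_Kgraph_eq_iff ha ⟨i, d⟩ ⟨j, e⟩).1 h
  have hdi : (d : ℤ) ≤ a + armOffset i := by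
    have := d.isLt; have := armLen_eq_add_armOffset ha i; omega
  have hej : (e : ℤ) ≤ a + armOffset j := by
    have := e.isLt; have := armLen_eq_add_armOffset ha j; omega
  obtain ⟨rfl, hde⟩ := eq_of_reducedTransmission_eq (by omega) (by omega) (by positivity)
    (by positivity) hdi hej hred
  exact Sigma.ext rfl (heq_of_eq (Fin.ext (by exact_mod_cast hde)))

theorem not_injective_transmission_Kgraph (m : ℕ) :
    ¬ Function.Injective (transmission (Kgraph (3 * m + 2))) := by
  have hred : reducedTransmission ((3 * m + 2 : ℕ) : ℤ) 0 (m : ℕ)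
      = reducedTransmission ((3 * m + 2 : ℕ) : ℤ) 3 (m + 1 : ℕ) := by
    simp only [reducedTransmission, armOffset, Matrix.cons_val_zero, Matrix.cons_val]
    push_cast
    ring
  intro hinj
  have h := (transmission_Kgraph_eq_iff (by omega)
    ⟨0, ⟨m, show m < 3 * m + 2 - 2 + 1 by omega⟩⟩
    ⟨3, ⟨m + 1, show m + 1 < 3 * m + 2 + 2 + 1 by omega⟩⟩).2 hred
  simpa using (coord _).symm.injective (hinj h)

/-- For `a ≥ 2`, the graph `K₄(a-2, a-1, a+1, a+2)` is transmission irregular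
if and only if `a ≢ 2 (mod 3)`. -/
theorem stmt_12 (a : ℕ) (ha : 2 ≤ a) :
    Function.Injective (transmission (Kgraph a)) ↔ a % 3 ≠ 2 := by
  refine ⟨fun hinj ha3 => ?_, injective_transmission_Kgraph ha⟩
  obtain ⟨m, rfl⟩ : ∃ m, a = 3 * m + 2 := ⟨a / 3, by omega⟩
  exact not_injective_transmission_Kgraph m hinj
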